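/- Let n ≥ 1 and let q = (q_1,…,q_n) : ℝ → ℝ^n be smooth. Then for all i, j ∈ {1,…,n} the components of the Killing vector fields in Viète coordinates are symmetric: (Z_i[q])^j = (Z_j[q])^i pointwise. -/

import Mathlib

noncomputable section

/-- The `j`-th component of the `i`-th Killing vector field in Viète coordinates,
`(Z_i[q])^j = ∂_x q_{j+i-1} + ∑_{k=1}^{j-1} (q_k ∂_x q_{j+i-k-1} - q_{j+i-k-1} ∂_x q_k)`,
with the convention `q_α := 0` for `α > n`; `Q` are the values, `Qx` the `x`-derivatives. -/
def killingZ (n i j : ℕ) (Q Qx : ℕ → ℝ) : ℝ :=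
  (if j + i - 1 ≤ n then Qx (j + i - 1) else 0) +
    ∑ k ∈ Finset.Icc 1 (j - 1),
      ((if k ≤ n then Q k else 0) * (if j + i - k - 1 ≤ n then Qx (j + i - k - 1) else 0) -
        (if j + i - k - 1 ≤ n then Q (j + i - k - 1) else 0) * (if k ≤ n then Qx k else 0))

/-- Reindex a vector of `ℝ^n` as a 1-based `ℕ`-indexed family (zero outside `1..n`). -/
def extQ (n : ℕ) (Q : Fin n → ℝ) : ℕ → ℝ := fun a =>
  if h : 1 ≤ a ∧ a ≤ n then Q ⟨a - 1, by omega⟩ else 0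

/-!
For `i ≤ j` the components `(Z_i)^j` and `(Z_j)^i` differ by the sum over `k ∈ [i, j - 1]` of
`q_k ∂q_{i+j-1-k} - q_{i+j-1-k} ∂q_k`. The reflection `k ↦ i + j - 1 - k` maps that range onto
itself and changes the sign of the summand, so the sum vanishes.
-/

open Finset

theorem sum_Icc_mul_sub_mul_reflect_eq_zero {R : Type*} [CommRing R] (u v : ℕ → R) (a b : ℕ) :
    ∑ k ∈ Icc a b, (u k * v (a + b - k) - u (a + b - k) * v k) = 0 := by
  rw [sum_sub_distrib, sub_eq_zero]
  refine sum_nbij' (fun k => a + b - k) (fun k => a + b - k) ?_ ?_ ?_ ?_ ?_ <;>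
    intro k hk <;> simp only [mem_Icc] at hk ⊢
  any_goals omega
  · rw [Nat.sub_sub_self (by omega)]

theorem sum_Icc_one_eq_add_sum_Icc {M : Type*} [AddCommMonoid M] (f : ℕ → M) {i m : ℕ}
    (hi : 1 ≤ i) (him : i ≤ m + 1) :
    ∑ k ∈ Icc 1 m, f k = ∑ k ∈ Icc 1 (i - 1), f k + ∑ k ∈ Icc i m, f k := by
  obtain ⟨l, rfl⟩ : ∃ l, i = l + 1 := ⟨i - 1, by omega⟩
  have hIcc_one (m : ℕ) : Icc 1 m = Ioc 0 m := Icc_add_one_left_eq_Ioc 0 m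
  rw [hIcc_one, hIcc_one, Icc_add_one_left_eq_Ioc, add_tsub_cancel_right]
  exact (sum_Ioc_consecutive f (Nat.zero_le l) (by omega)).symm

/-- The convention `q_α := 0` for `α > n`. -/
def zeroAbove {M : Type*} [Zero M] (n : ℕ) (f : ℕ → M) (k : ℕ) : M := if k ≤ n then f k else 0

theorem killingZ_eq_sum_zeroAbove (n i j : ℕ) (Q Qx : ℕ → ℝ) :
    killingZ n i j Q Qx = zeroAbove n Qx (i + j - 1) +
      ∑ k ∈ Icc 1 (j - 1), (zeroAbove n Q k * zeroAbove n Qx (i + j - 1 - k) -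
        zeroAbove n Q (i + j - 1 - k) * zeroAbove n Qx k) := by
  have hidx (k : ℕ) : i + j - k - 1 = i + j - 1 - k := by omega
  simp only [killingZ, add_comm j i]
  simp only [hidx, zeroAbove]

theorem killingZ_comm (n : ℕ) {i j : ℕ} (hi : 1 ≤ i) (hj : 1 ≤ j) (Q Qx : ℕ → ℝ) :
    killingZ n i j Q Qx = killingZ n j i Q Qx := by
  wlog hij : i ≤ j generalizing i j
  · exact (this hj hi (by omega)).symm
  rw [killingZ_eq_sum_zeroAbove, killingZ_eq_sum_zeroAbove, add_comm j i,
    sum_Icc_one_eq_add_sum_Icc _ hi (by omega), ← add_assoc, add_eq_left,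
    show i + j - 1 = i + (j - 1) by omega]
  exact sum_Icc_mul_sub_mul_reflect_eq_zero _ _ i (j - 1)

theorem killing_fields_symmetric (n : ℕ) (q : ℝ → Fin n → ℝ) (i j : ℕ) (hi1 : 1 ≤ i)
    (hj1 : 1 ≤ j) (x : ℝ) :
    killingZ n i j (extQ n (q x)) (extQ n (deriv q x)) =
      killingZ n j i (extQ n (q x)) (extQ n (deriv q x)) :=
  killingZ_comm n hi1 hj1 _ _
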